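/- If the two-element set {x_{n+1}, x̄_{n+2}} is a preferred extension of the argument system H_Ψ, then Φ is unsatisfiable. Equivalently, if Φ is satisfiable then there is an admissible set of H_Ψ strictly containing {x_{n+1}, x̄_{n+2}}, so {x_{n+1}, x̄_{n+2}} is not a maximal admissible set. -/

import Mathlib

/-! A satisfying assignment `β` of `Φ`, extended by `x_{n+1} = ⊤` and `x_{n+2} = ⊥`, satisfies `Ψ`,
and for every model `α` of `Ψ` the set `S_α` of `Ψ` together with the literals true under `α` is
admissible: a literal defends itself against its complement and `Ψ` defends it against `χ`, while
each clause argument attacking `Ψ` is counter-attacked by a true literal of its clause. Since `Ψ`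
lies in `S_α`, this is an admissible set strictly containing `{x_{n+1}, x̄_{n+2}}`, which therefore
cannot be a preferred extension. -/

/-- `att y x` means "y attacks x". `S` is conflict-free if no argument in `S`
attacks an argument in `S`. -/
def conflictFree {V : Type*} (att : V → V → Prop) (S : Set V) : Prop :=
  ∀ x ∈ S, ∀ y ∈ S, ¬ att y x

/-- `x` is acceptable w.r.t. `S` if every attacker of `x` is attacked by some member of `S`. -/
def acceptable {V : Type*} (att : V → V → Prop) (S : Set V) (x : V) : Prop :=
  ∀ y, att y x → ∃ z ∈ S, att z y

/-- `S` is admissible if it is conflict-free and each member is acceptable w.r.t. `S`. -/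
def admissible {V : Type*} (att : V → V → Prop) (S : Set V) : Prop :=
  conflictFree att S ∧ ∀ x ∈ S, acceptable att S x

/-- A preferred extension is a ⊆-maximal admissible set. -/
def preferredExt {V : Type*} (att : V → V → Prop) (S : Set V) : Prop :=
  admissible att S ∧ ∀ T, admissible att T → S ⊆ T → S = T

/-- A stable extension is a conflict-free set attacking every outside argument. -/
def stableExt {V : Type*} (att : V → V → Prop) (S : Set V) : Prop :=
  conflictFree att S ∧ ∀ y, y ∉ S → ∃ z ∈ S, att z y

/-- A 3-CNF over variables `Fin n` is given by `C : Fin m → Fin 3 → Fin n × Bool`,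
where literal `(k, true)` is `x_k` and `(k, false)` is `¬x_k`.
`PhiSat C α` says the assignment `α` satisfies `Φ = ∧_i C_i`. -/
def PhiSat {n m : ℕ} (C : Fin m → Fin 3 → Fin n × Bool) (α : Fin n → Bool) : Prop :=
  ∀ i : Fin m, ∃ j : Fin 3, α (C i j).1 = (C i j).2

/-- The new variable `x_{n+1}` as an element of `Fin (n+2)`. -/
def vn1 (n : ℕ) : Fin (n + 2) := ⟨n, by omega⟩

/-- The new variable `x_{n+2}` as an element of `Fin (n+2)`. -/
def vn2 (n : ℕ) : Fin (n + 2) := ⟨n + 1, by omega⟩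

/-- `PsiSat C α` says `α : Fin (n+2) → Bool` satisfies
`Ψ = ∧_i (C_i ∨ ¬x_{n+1} ∨ x_{n+2}) ∧ (C_i ∨ x_{n+1} ∨ ¬x_{n+2})`. -/
def PsiSat {n m : ℕ} (C : Fin m → Fin 3 → Fin n × Bool) (α : Fin (n + 2) → Bool) : Prop :=
  ∀ i : Fin m,
    ((∃ j : Fin 3, α (Fin.castAdd 2 (C i j).1) = (C i j).2) ∨
       α (vn1 n) = false ∨ α (vn2 n) = true) ∧
    ((∃ j : Fin 3, α (Fin.castAdd 2 (C i j).1) = (C i j).2) ∨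
       α (vn1 n) = true ∨ α (vn2 n) = false)

/-- The arguments of the system `H_Ψ`: the argument `Ψ`, the argument `χ`,
literal arguments `x_i` (`pos i`) and `x̄_i` (`neg i`) for `1 ≤ i ≤ n+2`, and
clause arguments `C_j^(1)` (`c1 j`) and `C_j^(2)` (`c2 j`) for `1 ≤ j ≤ m`. -/
inductive Arg (n m : ℕ) : Type where
  | psi : Arg n m
  | chi : Arg n m
  | pos : Fin (n + 2) → Arg n m
  | neg : Fin (n + 2) → Arg n m
  | c1 : Fin m → Arg n m
  | c2 : Fin m → Arg n m

/-- The literal argument corresponding to a literal: `x_k` for `(k, true)`,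
`x̄_k` for `(k, false)`. -/
def litArg {n m : ℕ} (l : Fin n × Bool) : Arg n m :=
  if l.2 then Arg.pos (Fin.castAdd 2 l.1) else Arg.neg (Fin.castAdd 2 l.1)

/-- The attack relation of `H_Ψ`: `attPsi C a b` means `a` attacks `b`. -/
inductive attPsi {n m : ℕ} (C : Fin m → Fin 3 → Fin n × Bool) : Arg n m → Arg n m → Prop where
  | posNeg (i : Fin (n + 2)) : attPsi C (.pos i) (.neg i)
  | negPos (i : Fin (n + 2)) : attPsi C (.neg i) (.pos i)
  | chiPos (i : Fin n) : attPsi C .chi (.pos (Fin.castAdd 2 i))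
  | chiNeg (i : Fin n) : attPsi C .chi (.neg (Fin.castAdd 2 i))
  | litC1 (i : Fin m) (j : Fin 3) : attPsi C (litArg (C i j)) (.c1 i)
  | litC2 (i : Fin m) (j : Fin 3) : attPsi C (litArg (C i j)) (.c2 i)
  | c1Psi (i : Fin m) : attPsi C (.c1 i) .psi
  | c2Psi (i : Fin m) : attPsi C (.c2 i) .psi
  | negN1C1 (i : Fin m) : attPsi C (.neg (vn1 n)) (.c1 i)
  | posN2C1 (i : Fin m) : attPsi C (.pos (vn2 n)) (.c1 i)
  | posN1C2 (i : Fin m) : attPsi C (.pos (vn1 n)) (.c2 i)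
  | negN2C2 (i : Fin m) : attPsi C (.neg (vn2 n)) (.c2 i)
  | psiChi : attPsi C .psi .chi

/-- The set `S_α = {Ψ} ∪ {x_i : α(x_i) = ⊤} ∪ {x̄_i : α(x_i) = ⊥}`. -/
def Salpha {n m : ℕ} (α : Fin (n + 2) → Bool) : Set (Arg n m) :=
  fun a =>
    match a with
    | .psi => True
    | .pos i => α i = true
    | .neg i => α i = false
    | _ => False

theorem preferredExt.not_ssubset {V : Type*} {att : V → V → Prop} {S T : Set V}
    (hS : preferredExt att S) (hT : admissible att T) : ¬ S ⊂ T :=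
  fun hST => hST.ne (hS.2 T hT hST.subset)

section Salpha

variable {n m : ℕ} (α : Fin (n + 2) → Bool)

@[simp] theorem psi_mem_Salpha : (Arg.psi : Arg n m) ∈ Salpha α := trivial

@[simp] theorem pos_mem_Salpha (i : Fin (n + 2)) :
    (Arg.pos i : Arg n m) ∈ Salpha α ↔ α i = true := Iff.rfl

@[simp] theorem neg_mem_Salpha (i : Fin (n + 2)) :
    (Arg.neg i : Arg n m) ∈ Salpha α ↔ α i = false := Iff.rfl

@[simp] theorem chi_notMem_Salpha : (Arg.chi : Arg n m) ∉ Salpha α := id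

@[simp] theorem c1_notMem_Salpha (i : Fin m) : (Arg.c1 i : Arg n m) ∉ Salpha α := id

@[simp] theorem c2_notMem_Salpha (i : Fin m) : (Arg.c2 i : Arg n m) ∉ Salpha α := id

theorem litArg_mem_Salpha (l : Fin n × Bool) :
    (litArg l : Arg n m) ∈ Salpha α ↔ α (Fin.castAdd 2 l.1) = l.2 := by
  obtain ⟨k, _ | _⟩ := l <;> simp [litArg]

theorem conflictFree_Salpha (C : Fin m → Fin 3 → Fin n × Bool) :
    conflictFree (attPsi C) (Salpha α) := by
  intro x hx y hy hyx
  cases hyx <;> simp_all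

theorem acceptable_psi_Salpha {C : Fin m → Fin 3 → Fin n × Bool} (hα : PsiSat C α) :
    acceptable (attPsi C) (Salpha α) Arg.psi := by
  intro y hy
  cases hy with
  | c1Psi i =>
    rcases (hα i).1 with ⟨j, hj⟩ | h | h
    · exact ⟨_, (litArg_mem_Salpha α _).2 hj, .litC1 i j⟩
    · exact ⟨_, (neg_mem_Salpha α _).2 h, .negN1C1 i⟩
    · exact ⟨_, (pos_mem_Salpha α _).2 h, .posN2C1 i⟩
  | c2Psi i =>
    rcases (hα i).2 with ⟨j, hj⟩ | h | h
    · exact ⟨_, (litArg_mem_Salpha α _).2 hj, .litC2 i j⟩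
    · exact ⟨_, (pos_mem_Salpha α _).2 h, .posN1C2 i⟩
    · exact ⟨_, (neg_mem_Salpha α _).2 h, .negN2C2 i⟩

theorem acceptable_pos_Salpha (C : Fin m → Fin 3 → Fin n × Bool) {i : Fin (n + 2)}
    (hi : α i = true) : acceptable (attPsi C) (Salpha α) (Arg.pos i) := by
  intro y hy
  cases hy with
  | negPos => exact ⟨_, (pos_mem_Salpha α i).2 hi, .posNeg i⟩
  | chiPos => exact ⟨_, psi_mem_Salpha α, .psiChi⟩

theorem acceptable_neg_Salpha (C : Fin m → Fin 3 → Fin n × Bool) {i : Fin (n + 2)}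
    (hi : α i = false) : acceptable (attPsi C) (Salpha α) (Arg.neg i) := by
  intro y hy
  cases hy with
  | posNeg => exact ⟨_, (neg_mem_Salpha α i).2 hi, .negPos i⟩
  | chiNeg => exact ⟨_, psi_mem_Salpha α, .psiChi⟩

theorem admissible_Salpha {C : Fin m → Fin 3 → Fin n × Bool} (hα : PsiSat C α) :
    admissible (attPsi C) (Salpha α) := by
  refine ⟨conflictFree_Salpha α C, ?_⟩
  rintro (_ | _ | i | i | i | i) hx
  · exact acceptable_psi_Salpha α hα
  · exact absurd hx (chi_notMem_Salpha α)
  · exact acceptable_pos_Salpha α C hx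
  · exact acceptable_neg_Salpha α C hx
  · exact absurd hx (c1_notMem_Salpha α i)
  · exact absurd hx (c2_notMem_Salpha α i)

theorem pair_ssubset_Salpha (h1 : α (vn1 n) = true) (h2 : α (vn2 n) = false) :
    ({Arg.pos (vn1 n), Arg.neg (vn2 n)} : Set (Arg n m)) ⊂ Salpha α := by
  refine Set.ssubset_iff_of_subset ?_ |>.2 ⟨Arg.psi, psi_mem_Salpha α, by simp⟩
  rintro _ (rfl | rfl) <;> simpa

end Salpha

theorem psiSat_append {n m : ℕ} {C : Fin m → Fin 3 → Fin n × Bool} {β : Fin n → Bool}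
    (hβ : PhiSat C β) (v : Fin 2 → Bool) : PsiSat C (Fin.append β v) := by
  intro i
  have hC : ∃ j : Fin 3, Fin.append β v (Fin.castAdd 2 (C i j).1) = (C i j).2 := by
    simpa only [Fin.append_left] using hβ i
  exact ⟨.inl hC, .inl hC⟩

theorem append_vn1 {n : ℕ} (β : Fin n → Bool) (v : Fin 2 → Bool) :
    Fin.append β v (vn1 n) = v 0 :=
  Fin.append_right β v 0

theorem append_vn2 {n : ℕ} (β : Fin n → Bool) (v : Fin 2 → Bool) :
    Fin.append β v (vn2 n) = v 1 :=
  Fin.append_right β v 1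

theorem exists_admissible_ssuperset_pair {n m : ℕ} {C : Fin m → Fin 3 → Fin n × Bool}
    {β : Fin n → Bool} (hβ : PhiSat C β) :
    ∃ T : Set (Arg n m), admissible (attPsi C) T ∧
      ({Arg.pos (vn1 n), Arg.neg (vn2 n)} : Set (Arg n m)) ⊂ T :=
  ⟨Salpha (Fin.append β ![true, false]), admissible_Salpha _ (psiSat_append hβ _),
    pair_ssubset_Salpha _ (append_vn1 β _) (append_vn2 β _)⟩

theorem stmt_12_general (n m : ℕ)
    (C : Fin m → Fin 3 → Fin n × Bool) :
    (preferredExt (attPsi C) ({Arg.pos (vn1 n), Arg.neg (vn2 n)} : Set (Arg n m)) →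
        ¬ ∃ β : Fin n → Bool, PhiSat C β) ∧
    ((∃ β : Fin n → Bool, PhiSat C β) →
        ∃ T : Set (Arg n m), admissible (attPsi C) T ∧
          ({Arg.pos (vn1 n), Arg.neg (vn2 n)} : Set (Arg n m)) ⊂ T) := by
  refine ⟨?_, fun ⟨β, hβ⟩ => exists_admissible_ssuperset_pair hβ⟩
  rintro hpref ⟨β, hβ⟩
  obtain ⟨T, hT, hssub⟩ := exists_admissible_ssuperset_pair (C := C) hβ
  exact hpref.not_ssubset hT hssub

/-- If `{x_{n+1}, x̄_{n+2}}` is a preferred extension of `H_Ψ` then `Φ` is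
unsatisfiable; equivalently, if `Φ` is satisfiable then some admissible set of
`H_Ψ` strictly contains `{x_{n+1}, x̄_{n+2}}`, so that set is not a maximal
admissible set. -/
theorem stmt_12 (n m : ℕ) (hn : 1 ≤ n) (hm : 1 ≤ m)
    (C : Fin m → Fin 3 → Fin n × Bool) :
    (preferredExt (attPsi C) ({Arg.pos (vn1 n), Arg.neg (vn2 n)} : Set (Arg n m)) →
        ¬ ∃ β : Fin n → Bool, PhiSat C β) ∧
    ((∃ β : Fin n → Bool, PhiSat C β) →
        ∃ T : Set (Arg n m), admissible (attPsi C) T ∧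
          ({Arg.pos (vn1 n), Arg.neg (vn2 n)} : Set (Arg n m)) ⊂ T) :=
  stmt_12_general n m C
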